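/- arXiv:2502.03849 — 3 statements merged into one kernel-verified Lean document; each statement's English description precedes it below -/
import Mathlib

section
/- Suppose K¹ ⊆ K indexes pairwise disjoint regions R_k, k ∈ K¹, whose union is {1,…,m}, and suppose every region R_{k'} with k' ∈ K is contained in some R_k with k ∈ K¹ (forest with roots K¹). Then for every S ⊆ {1,…,m}, V*(S) = Σ_{k∈K¹} V*(S ∩ R_k), where V*(U) = max{|A| : A ⊆ U, ∀k' ∈ K, |A ∩ R_{k'}| ≤ ζ_{k'}}. -/
open Finset

noncomputable def Vstar {m : ℕ} {ι : Type*} [Fintype ι]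
    (R : ι → Finset (Fin m)) (ζ : ι → ℕ) (S : Finset (Fin m)) : ℕ :=
  (S.powerset.filter (fun A => ∀ k, (A ∩ R k).card ≤ ζ k)).sup Finset.card

/-- If the roots `K¹` partition `{1,…,m}` and every region is contained in some
root, then `V*` decomposes as a sum over the roots:
`V*(S) = ∑_{k ∈ K¹} V*(S ∩ R k)`. -/
theorem vstar_eq_sum_roots {m : ℕ} {ι : Type*} [Fintype ι] [DecidableEq ι]
    (R : ι → Finset (Fin m)) (ζ : ι → ℕ) (K1 : Finset ι)
    (hdisj : (K1 : Set ι).PairwiseDisjoint R)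
    (hcover : K1.biUnion R = Finset.univ)
    (hroots : ∀ k' : ι, ∃ k ∈ K1, R k' ⊆ R k) :
    ∀ S : Finset (Fin m), Vstar R ζ S = ∑ k ∈ K1, Vstar R ζ (S ∩ R k) := by
  intro S
  classical
  apply le_antisymm
  · -- `≤` : decompose any admissible A over the roots
    apply Finset.sup_le
    intro A hA
    simp only [Finset.mem_filter, Finset.mem_powerset] at hA
    obtain ⟨hAS, hAadm⟩ := hA
    have hrepr : A = K1.biUnion (fun k => A ∩ R k) := by
      ext x
      simp only [Finset.mem_biUnion, Finset.mem_inter]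
      constructor
      · intro hx
        have hx' : x ∈ K1.biUnion R := by rw [hcover]; exact Finset.mem_univ x
        obtain ⟨k, hk, hxk⟩ := Finset.mem_biUnion.mp hx'
        exact ⟨k, hk, hx, hxk⟩
      · rintro ⟨k, -, hx, -⟩; exact hx
    calc A.card = ∑ k ∈ K1, (A ∩ R k).card := by
          conv_lhs => rw [hrepr]
          refine Finset.card_biUnion ?_
          intro i hi j hj hij
          exact (hdisj hi hj hij).mono Finset.inter_subset_right
            Finset.inter_subset_right
      _ ≤ ∑ k ∈ K1, Vstar R ζ (S ∩ R k) := by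
          refine Finset.sum_le_sum fun k hk => ?_
          apply Finset.le_sup (f := Finset.card)
          simp only [Finset.mem_filter, Finset.mem_powerset]
          refine ⟨Finset.inter_subset_inter hAS (le_refl _), fun k' => ?_⟩
          calc ((A ∩ R k) ∩ R k').card ≤ (A ∩ R k').card := by
                apply Finset.card_le_card
                intro x hx
                simp only [Finset.mem_inter] at hx ⊢
                tauto
            _ ≤ ζ k' := hAadm k'
  · -- `≥` : combine optimal sets for each root
    have hchoice : ∀ k : ι, ∃ A, A ∈ ((S ∩ R k).powerset.filter
        (fun A => ∀ k', (A ∩ R k').card ≤ ζ k')) ∧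
        ((S ∩ R k).powerset.filter
          (fun A => ∀ k', (A ∩ R k').card ≤ ζ k')).sup Finset.card = A.card := by
      intro k
      apply Finset.exists_mem_eq_sup
      refine ⟨∅, Finset.mem_filter.mpr ⟨Finset.mem_powerset.mpr (Finset.empty_subset _),
        fun k' => by simp⟩⟩
    choose A hAmem hAcard using hchoice
    have hRsub : ∀ k, A k ⊆ R k := fun k => by
      have := Finset.mem_powerset.mp (Finset.mem_filter.mp (hAmem k)).1
      exact this.trans Finset.inter_subset_right
    have hSsub : ∀ k, A k ⊆ S := fun k => by
      have := Finset.mem_powerset.mp (Finset.mem_filter.mp (hAmem k)).1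
      exact this.trans Finset.inter_subset_left
    have hadm : ∀ k k', ((A k) ∩ R k').card ≤ ζ k' := fun k k' =>
      (Finset.mem_filter.mp (hAmem k)).2 k'
    set B : Finset (Fin m) := K1.biUnion A with hB
    have hBk : ∀ k ∈ K1, B ∩ R k = A k := by
      intro k hk
      ext x
      simp only [hB, Finset.mem_inter, Finset.mem_biUnion]
      constructor
      · rintro ⟨⟨j, hj, hxj⟩, hxk⟩
        rcases eq_or_ne j k with rfl | hne
        · exact hxj
        · exact absurd (Finset.mem_inter.mpr ⟨hRsub j hxj, hxk⟩)
            (by simpa [Finset.disjoint_iff_inter_eq_empty.mp (hdisj hj hk hne)] using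
              Finset.not_mem_empty x)
      · intro hx
        exact ⟨⟨k, hk, hx⟩, hRsub k hx⟩
    have hBmem : B ∈ S.powerset.filter (fun A => ∀ k, (A ∩ R k).card ≤ ζ k) := by
      simp only [Finset.mem_filter, Finset.mem_powerset]
      constructor
      · intro x hx
        obtain ⟨k, hk, hxk⟩ := Finset.mem_biUnion.mp hx
        exact hSsub k hxk
      · intro k'
        obtain ⟨k0, hk0, hsub⟩ := hroots k'
        have h1 : B ∩ R k' = (A k0) ∩ R k' := by
          have : B ∩ R k' = (B ∩ R k0) ∩ R k' := by
            ext x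
            simp only [Finset.mem_inter]
            constructor
            · rintro ⟨hxB, hxk'⟩; exact ⟨⟨hxB, hsub hxk'⟩, hxk'⟩
            · rintro ⟨⟨hxB, -⟩, hxk'⟩; exact ⟨hxB, hxk'⟩
          rw [this, hBk k0 hk0]
        rw [h1]
        exact hadm k0 k'
    calc ∑ k ∈ K1, Vstar R ζ (S ∩ R k) = ∑ k ∈ K1, (A k).card := by
          refine Finset.sum_congr rfl fun k hk => ?_
          exact hAcard k
      _ = B.card := by
          rw [hB]
          refine (Finset.card_biUnion ?_).symm
          intro i hi j hj hij
          exact (hdisj hi hj hij).mono (hRsub i) (hRsub j)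
      _ ≤ Vstar R ζ S := Finset.le_sup (f := Finset.card) hBmem
end

section
/- Let V*(S) = max{|A| : A ⊆ S, ∀k ∈ K, |A ∩ R_k| ≤ ζ_k}. Suppose V*(S ∩ R_k) < ζ_k for all regions R_k containing a point i ∉ S, these regions being nested (forest structure). Then V*((S ∪ {i}) ∩ R_k) = V*(S ∩ R_k) + 1 for every such region R_k. -/
open Finset

/-- In a forest-structured family, if the local bounds are not saturated on all
regions containing a new point `i ∉ S`, then adding `i` increments the local
value on each of these regions:
`V*((S ∪ {i}) ∩ R k) = V*(S ∩ R k) + 1` for all `k` with `i ∈ R k`. -/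
theorem vstar_insert_increment {m : ℕ} {ι : Type*} [Fintype ι]
    (R : ι → Finset (Fin m)) (ζ : ι → ℕ)
    (hforest : ∀ k k' : ι, R k ∩ R k' = R k ∨ R k ∩ R k' = R k' ∨ R k ∩ R k' = ∅)
    (S : Finset (Fin m)) (i : Fin m) (hiS : i ∉ S)
    (hunsat : ∀ k : ι, i ∈ R k → Vstar R ζ (S ∩ R k) < ζ k) :
    ∀ k : ι, i ∈ R k →
      Vstar R ζ ((insert i S) ∩ R k) = Vstar R ζ (S ∩ R k) + 1 := by
  intro k hik
  have hne : ((S ∩ R k).powerset.filter (fun A => ∀ j, (A ∩ R j).card ≤ ζ j)).Nonempty :=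
    ⟨∅, by simp only [mem_filter, mem_powerset]; exact ⟨empty_subset _, fun j => by simp⟩⟩
  obtain ⟨A, hA, hAcard⟩ := Finset.exists_mem_eq_sup _ hne Finset.card
  simp only [mem_filter, mem_powerset] at hA
  obtain ⟨hAsub, hAfeas⟩ := hA
  have hiA : i ∉ A := fun h => hiS (mem_of_mem_inter_left (hAsub h))
  -- lower bound
  have hge : Vstar R ζ (S ∩ R k) + 1 ≤ Vstar R ζ ((insert i S) ∩ R k) := by
    have hfeas : ∀ j, ((insert i A) ∩ R j).card ≤ ζ j := by
      intro j
      by_cases hij : i ∈ R j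
      · have hmem : A ∩ R j ∈ (S ∩ R j).powerset.filter
            (fun B => ∀ l, (B ∩ R l).card ≤ ζ l) := by
          simp only [mem_filter, mem_powerset]
          refine ⟨inter_subset_inter (hAsub.trans inter_subset_left) le_rfl, fun l => ?_⟩
          exact le_trans (card_le_card (inter_subset_inter inter_subset_left le_rfl)) (hAfeas l)
        have hle : (A ∩ R j).card ≤ Vstar R ζ (S ∩ R j) := Finset.le_sup hmem
        rw [insert_inter_of_mem hij,
          card_insert_of_notMem (fun h => hiA (mem_of_mem_inter_left h))]
        exact Nat.succ_le_of_lt (lt_of_le_of_lt hle (hunsat j hij))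
      · rw [insert_inter_of_notMem hij]; exact hAfeas j
    have hmem : insert i A ∈ ((insert i S) ∩ R k).powerset.filter
        (fun B => ∀ l, (B ∩ R l).card ≤ ζ l) := by
      simp only [mem_filter, mem_powerset]
      refine ⟨?_, hfeas⟩
      intro x hx
      rcases mem_insert.mp hx with rfl | hx
      · exact mem_inter.mpr ⟨mem_insert_self _ _, hik⟩
      · exact mem_inter.mpr ⟨mem_insert_of_mem (mem_of_mem_inter_left (hAsub hx)),
          mem_of_mem_inter_right (hAsub hx)⟩
    have h2 := Finset.le_sup (f := Finset.card) hmem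
    rw [card_insert_of_notMem hiA] at h2
    have h3 : Vstar R ζ (S ∩ R k) = A.card := hAcard
    rw [h3]
    exact h2
  -- upper bound
  have hle : Vstar R ζ ((insert i S) ∩ R k) ≤ Vstar R ζ (S ∩ R k) + 1 := by
    apply Finset.sup_le
    intro B hB
    simp only [mem_filter, mem_powerset] at hB
    obtain ⟨hBsub, hBfeas⟩ := hB
    have hmem : B.erase i ∈ (S ∩ R k).powerset.filter
        (fun C => ∀ l, (C ∩ R l).card ≤ ζ l) := by
      simp only [mem_filter, mem_powerset]
      constructor
      · intro x hx
        have hxi := Finset.ne_of_mem_erase hx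
        have := hBsub (Finset.mem_of_mem_erase hx)
        rcases mem_inter.mp this with ⟨h1, h2⟩
        rcases mem_insert.mp h1 with rfl | h1
        · exact absurd rfl hxi
        · exact mem_inter.mpr ⟨h1, h2⟩
      · intro l
        exact le_trans (card_le_card (inter_subset_inter (erase_subset _ _) le_rfl)) (hBfeas l)
    have h1 : (B.erase i).card ≤ Vstar R ζ (S ∩ R k) := Finset.le_sup hmem
    have h2 : B.card ≤ (B.erase i).card + 1 := by
      have := Finset.card_erase_add_one (a := i) (s := B)
      by_cases hiB : i ∈ B
      · rw [Finset.card_erase_of_mem hiB]; omega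
      · rw [Finset.erase_eq_of_notMem hiB]; omega
    omega
  omega
end

section
/- Let T' ⊆ T ⊆ {1,…,m}, suppose the family {R_k} has a forest structure, and suppose T = S ∩ R_{k₁} and T' = S ∩ R_{k₂} with R_{k₂} ⊆ R_{k₁} nested regions. Let A ⊆ T' achieve V*(T') (i.e., |A| = V*(T') and |A ∩ R_k| ≤ ζ_k for all k). Then there exists a set A' with A ⊆ A' ⊆ T, A' \ A ⊆ T \ T', |A'| = V*(T), and |A' ∩ R_k| ≤ ζ_k for all k ∈ K. -/
open Finset

section Aux

variable {m : ℕ} {ι : Type*} [Fintype ι] (R : ι → Finset (Fin m)) (ζ : ι → ℕ)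

lemma feas_le_vstar {T A : Finset (Fin m)} (hA : A ⊆ T)
    (hf : ∀ k, (A ∩ R k).card ≤ ζ k) : A.card ≤ Vstar R ζ T :=
  Finset.le_sup (by simp only [Finset.mem_filter, Finset.mem_powerset]; exact ⟨hA, hf⟩)

lemma vstar_attained (T : Finset (Fin m)) :
    ∃ B, B ⊆ T ∧ (∀ k, (B ∩ R k).card ≤ ζ k) ∧ B.card = Vstar R ζ T := by
  have hne : (T.powerset.filter (fun A => ∀ k, (A ∩ R k).card ≤ ζ k)).Nonempty :=
    ⟨∅, by simp⟩
  obtain ⟨B, hB, hBc⟩ := Finset.exists_mem_eq_sup _ hne Finset.card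
  simp only [mem_filter, mem_powerset] at hB
  exact ⟨B, hB.1, hB.2, hBc.symm⟩

lemma laminar_exchange
    (hforest : ∀ k k' : ι, R k ∩ R k' = R k ∨ R k ∩ R k' = R k' ∨ R k ∩ R k' = ∅)
    {A B : Finset (Fin m)}
    (hAf : ∀ k, (A ∩ R k).card ≤ ζ k) (hBf : ∀ k, (B ∩ R k).card ≤ ζ k)
    (hcard : A.card < B.card) :
    ∃ x ∈ B \ A, ∀ k, ((insert x A) ∩ R k).card ≤ ζ k := by
  by_contra hcon
  push_neg at hcon
  -- every x ∈ B \ A lies in some tight region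
  have key0 : ∀ x ∈ B \ A, ∃ k : ι, x ∈ R k ∧ (A ∩ R k).card = ζ k := by
    intro x hx
    obtain ⟨k, hk⟩ := hcon x hx
    have hxA : x ∉ A := (mem_sdiff.mp hx).2
    have hxR : x ∈ R k := by
      by_contra hxR
      have heq : (insert x A) ∩ R k = A ∩ R k := by
        ext y; simp only [mem_inter, mem_insert]
        constructor
        · rintro ⟨(rfl | hy), hyR⟩
          · exact absurd hyR hxR
          · exact ⟨hy, hyR⟩
        · rintro ⟨hy, hyR⟩; exact ⟨Or.inr hy, hyR⟩
      rw [heq] at hk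
      exact absurd (hAf k) (not_le.mpr hk)
    have h1 : (insert x A) ∩ R k = insert x (A ∩ R k) := by
      ext y; simp only [mem_inter, mem_insert]
      constructor
      · rintro ⟨(rfl | hy), hyR⟩
        · exact Or.inl rfl
        · exact Or.inr ⟨hy, hyR⟩
      · rintro (rfl | ⟨hy, hyR⟩)
        · exact ⟨Or.inl rfl, hxR⟩
        · exact ⟨Or.inr hy, hyR⟩
    rw [h1, card_insert_of_notMem (fun h => hxA (mem_inter.mp h).1)] at hk
    have := hAf k
    exact ⟨k, hxR, by omega⟩
  -- B \ A is nonempty, hence ι is inhabited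
  have hBA : (B \ A).Nonempty := by
    rw [sdiff_nonempty]
    intro h
    exact absurd (card_le_card h) (not_le.mpr hcard)
  have hι : Nonempty ι := ⟨(key0 _ hBA.choose_spec).choose⟩
  -- choose a tight region of maximal cardinality for each x ∈ B \ A
  have key : ∀ x : Fin m, ∃ k : ι, x ∈ B \ A →
      x ∈ R k ∧ (A ∩ R k).card = ζ k ∧
      ∀ k', x ∈ R k' → (A ∩ R k').card = ζ k' → (R k').card ≤ (R k).card := by
    intro x
    by_cases hx : x ∈ B \ A
    · obtain ⟨k, hkR, hkt⟩ := key0 x hx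
      have hne : (Finset.univ.filter
          (fun k' : ι => x ∈ R k' ∧ (A ∩ R k').card = ζ k')).Nonempty :=
        ⟨k, by simp [hkR, hkt]⟩
      obtain ⟨k₀, hk₀, hmax⟩ := Finset.exists_max_image _ (fun k' => (R k').card) hne
      simp only [mem_filter, mem_univ, true_and] at hk₀
      refine ⟨k₀, fun _ => ⟨hk₀.1, hk₀.2, fun k' h1 h2 => hmax k' ?_⟩⟩
      simp only [mem_filter, mem_univ, true_and]
      exact ⟨h1, h2⟩
    · exact ⟨Classical.arbitrary ι, fun h => absurd h hx⟩
  choose f hf using key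
  classical
  -- the chosen maximal tight regions
  set 𝓜 : Finset (Finset (Fin m)) := (B \ A).image (fun x => R (f x)) with h𝓜
  have hmem : ∀ M ∈ 𝓜, ∃ x ∈ B \ A, M = R (f x) := by
    intro M hM
    simp only [h𝓜, mem_image] at hM
    obtain ⟨x, hx, hxM⟩ := hM
    exact ⟨x, hx, hxM.symm⟩
  -- pairwise disjoint
  have hdisj : ∀ M ∈ 𝓜, ∀ M' ∈ 𝓜, M ≠ M' → Disjoint M M' := by
    intro M hM M' hM' hne
    obtain ⟨x, hx, rfl⟩ := hmem M hM
    obtain ⟨y, hy, rfl⟩ := hmem M' hM'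
    obtain ⟨hxR, hxt, hxmax⟩ := hf x hx
    obtain ⟨hyR, hyt, hymax⟩ := hf y hy
    by_contra hnd
    rcases hforest (f x) (f y) with h | h | h
    · -- R (f x) ⊆ R (f y)
      have hsub : R (f x) ⊆ R (f y) := by
        intro z hz
        have : z ∈ R (f x) ∩ R (f y) := h.symm ▸ hz
        exact (mem_inter.mp this).2
      have : (R (f y)).card ≤ (R (f x)).card := hxmax (f y) (hsub hxR) hyt
      exact hne (Finset.eq_of_subset_of_card_le hsub this)
    · -- R (f y) ⊆ R (f x)
      have hsub : R (f y) ⊆ R (f x) := by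
        intro z hz
        have : z ∈ R (f x) ∩ R (f y) := h.symm ▸ hz
        exact (mem_inter.mp this).1
      have : (R (f x)).card ≤ (R (f y)).card := hymax (f x) (hsub hyR) hxt
      exact hne (Finset.eq_of_subset_of_card_le hsub this).symm
    · exact hnd (disjoint_iff_inter_eq_empty.mpr h)
  set U : Finset (Fin m) := 𝓜.biUnion id with hU
  -- B \ U ⊆ A \ U
  have hBU : B \ U ⊆ A \ U := by
    intro z hz
    rw [mem_sdiff] at hz ⊢
    refine ⟨?_, hz.2⟩
    by_contra hzA
    have hzBA : z ∈ B \ A := mem_sdiff.mpr ⟨hz.1, hzA⟩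
    have : z ∈ U := by
      rw [hU, mem_biUnion]
      exact ⟨R (f z), mem_image_of_mem _ hzBA, (hf z hzBA).1⟩
    exact hz.2 this
  -- counting
  have hBsum : (B ∩ U).card = ∑ M ∈ 𝓜, (B ∩ M).card := by
    have : B ∩ U = 𝓜.biUnion (fun M => B ∩ M) := by
      ext z
      simp only [hU, mem_inter, mem_biUnion, id_eq]
      tauto
    rw [this]
    exact card_biUnion (fun M hM M' hM' hne =>
      Finset.disjoint_left.mpr (fun z hz hz' =>
        Finset.disjoint_left.mp (hdisj M hM M' hM' hne)
          (mem_inter.mp hz).2 (mem_inter.mp hz').2))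
  have hAsum : (A ∩ U).card = ∑ M ∈ 𝓜, (A ∩ M).card := by
    have : A ∩ U = 𝓜.biUnion (fun M => A ∩ M) := by
      ext z
      simp only [hU, mem_inter, mem_biUnion, id_eq]
      tauto
    rw [this]
    exact card_biUnion (fun M hM M' hM' hne =>
      Finset.disjoint_left.mpr (fun z hz hz' =>
        Finset.disjoint_left.mp (hdisj M hM M' hM' hne)
          (mem_inter.mp hz).2 (mem_inter.mp hz').2))
  have hsum_le : ∑ M ∈ 𝓜, (B ∩ M).card ≤ ∑ M ∈ 𝓜, (A ∩ M).card := by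
    refine Finset.sum_le_sum (fun M hM => ?_)
    obtain ⟨x, hx, rfl⟩ := hmem M hM
    obtain ⟨_, hxt, _⟩ := hf x hx
    exact le_trans (hBf (f x)) hxt.ge
  have hB' : B.card = (B \ U).card + (B ∩ U).card := (card_sdiff_add_card_inter B U).symm
  have hA' : A.card = (A \ U).card + (A ∩ U).card := (card_sdiff_add_card_inter A U).symm
  have : B.card ≤ A.card := by
    rw [hB', hA', hBsum, hAsum]
    exact Nat.add_le_add (card_le_card hBU) hsum_le
  omega

lemma vstar_grow (T T' : Finset (Fin m)) (hT'T : T' ⊆ T)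
    (hforest : ∀ k k' : ι, R k ∩ R k' = R k ∨ R k ∩ R k' = R k' ∨ R k ∩ R k' = ∅) :
    ∀ n (A : Finset (Fin m)), Vstar R ζ T ≤ A.card + n →
      (∀ k, (A ∩ R k).card ≤ ζ k) → A ⊆ T → (A ∩ T').card = Vstar R ζ T' →
      ∃ A', A ⊆ A' ∧ A' ⊆ T ∧ A' \ A ⊆ T \ T' ∧ A'.card = Vstar R ζ T ∧
        ∀ k, (A' ∩ R k).card ≤ ζ k := by
  intro n
  induction n with
  | zero =>
    intro A hle hfA hAT _
    refine ⟨A, subset_rfl, hAT, by simp, ?_, hfA⟩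
    exact le_antisymm (feas_le_vstar R ζ hAT hfA) (by simpa using hle)
  | succ n ih =>
    intro A hle hfA hAT hopt
    rcases eq_or_lt_of_le (feas_le_vstar R ζ hAT hfA) with heq | hlt
    · exact ⟨A, subset_rfl, hAT, by simp, heq, hfA⟩
    obtain ⟨Bo, hBoT, hBof, hBoc⟩ := vstar_attained R ζ T
    have hABo : A.card < Bo.card := hBoc ▸ hlt
    obtain ⟨x, hxBA, hxf⟩ := laminar_exchange R ζ hforest hfA hBof hABo
    have hxA : x ∉ A := (mem_sdiff.mp hxBA).2
    have hxT : x ∈ T := hBoT (mem_sdiff.mp hxBA).1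
    have hxT' : x ∉ T' := by
      intro hxT'
      have hsub : insert x (A ∩ T') ⊆ T' :=
        insert_subset hxT' (fun z hz => (mem_inter.mp hz).2)
      have hfeas : ∀ k, ((insert x (A ∩ T')) ∩ R k).card ≤ ζ k := by
        intro k
        refine le_trans (card_le_card ?_) (hxf k)
        intro z hz
        rw [mem_inter] at hz ⊢
        rcases mem_insert.mp hz.1 with rfl | hz'
        · exact ⟨mem_insert_self _ _, hz.2⟩
        · exact ⟨mem_insert_of_mem (mem_inter.mp hz').1, hz.2⟩
      have hle' := feas_le_vstar R ζ hsub hfeas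
      rw [card_insert_of_notMem (fun h => hxA (mem_inter.mp h).1)] at hle'
      omega
    have h1 : Vstar R ζ T ≤ (insert x A).card + n := by
      rw [card_insert_of_notMem hxA]; omega
    have h2 : insert x A ⊆ T := insert_subset hxT hAT
    have h3 : (insert x A) ∩ T' = A ∩ T' := by
      ext z
      simp only [mem_inter, mem_insert]
      constructor
      · rintro ⟨(rfl | hz), hzT'⟩
        · exact absurd hzT' hxT'
        · exact ⟨hz, hzT'⟩
      · rintro ⟨hz, hzT'⟩; exact ⟨Or.inr hz, hzT'⟩
    obtain ⟨A', h4, h5, h6, h7, h8⟩ := ih (insert x A) h1 hxf h2 (by rw [h3]; exact hopt)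
    refine ⟨A', (subset_insert x A).trans h4, h5, ?_, h7, h8⟩
    intro y hy
    rw [mem_sdiff] at hy
    by_cases hyx : y = x
    · subst hyx; exact mem_sdiff.mpr ⟨hxT, hxT'⟩
    · exact h6 (mem_sdiff.mpr ⟨hy.1, by
        simp only [mem_insert, not_or]; exact ⟨hyx, hy.2⟩⟩)

end Aux

/-- Extension of an optimal witness: for nested regions `R k₂ ⊆ R k₁` in a
forest-structured family, any optimal feasible subset of `T' = S ∩ R k₂` can be
extended, using only points of `T \ T'` with `T = S ∩ R k₁`, to an optimal
feasible subset of `T`. -/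
theorem vstar_extend_optimal_witness {m : ℕ} {ι : Type*} [Fintype ι]
    (R : ι → Finset (Fin m)) (ζ : ι → ℕ)
    (hforest : ∀ k k' : ι, R k ∩ R k' = R k ∨ R k ∩ R k' = R k' ∨ R k ∩ R k' = ∅)
    (S : Finset (Fin m)) (k₁ k₂ : ι) (hnested : R k₂ ⊆ R k₁)
    (A : Finset (Fin m)) (hA : A ⊆ S ∩ R k₂)
    (hAcard : A.card = Vstar R ζ (S ∩ R k₂))
    (hAfeas : ∀ k : ι, (A ∩ R k).card ≤ ζ k) :
    ∃ A' : Finset (Fin m), A ⊆ A' ∧ A' ⊆ S ∩ R k₁ ∧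
      A' \ A ⊆ (S ∩ R k₁) \ (S ∩ R k₂) ∧
      A'.card = Vstar R ζ (S ∩ R k₁) ∧
      ∀ k : ι, (A' ∩ R k).card ≤ ζ k := by
  have hT'T : S ∩ R k₂ ⊆ S ∩ R k₁ :=
    inter_subset_inter subset_rfl hnested
  have hAT : A ⊆ S ∩ R k₁ := hA.trans hT'T
  have hopt : (A ∩ (S ∩ R k₂)).card = Vstar R ζ (S ∩ R k₂) := by
    rw [inter_eq_left.mpr hA]; exact hAcard
  exact vstar_grow R ζ (S ∩ R k₁) (S ∩ R k₂) hT'T hforest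
    (Vstar R ζ (S ∩ R k₁)) A (by omega) hAfeas hAT hopt
end
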